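/- arXiv:1404.4089 — 7 statements merged into one kernel-verified Lean document; each statement's English description precedes it below -/
import Mathlib

section
/- Any two compressed (X,Y)-partitions of the same Boolean function f are equal as sets of pairs of Boolean functions; i.e., the compressed (X,Y)-partition of a Boolean function is unique. -/
/-- An (X,Y)-partition of a Boolean function `f`, where `σ` is the type of
assignments to the X-variables and `τ` the type of assignments to the
Y-variables: a finite set of prime-sub pairs whose primes are consistent,
pairwise mutually exclusive and exhaustive, and whose disjunction of
prime-sub conjunctions equals `f`. -/
def IsXYPartition {σ τ : Type} (P : Finset ((σ → Bool) × (τ → Bool)))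
    (f : σ → τ → Bool) : Prop :=
  (∀ e ∈ P, ∃ x, e.1 x = true) ∧
  (∀ e ∈ P, ∀ e' ∈ P, e ≠ e' → ∀ x, ¬(e.1 x = true ∧ e'.1 x = true)) ∧
  (∀ x, ∃ e ∈ P, e.1 x = true) ∧
  (∀ x y, f x y = true ↔ ∃ e ∈ P, e.1 x = true ∧ e.2 y = true)

/-- A partition is compressed if distinct elements have distinct subs. -/
def IsCompressed {σ τ : Type} (P : Finset ((σ → Bool) × (τ → Bool))) : Prop :=
  ∀ e ∈ P, ∀ e' ∈ P, e.2 = e'.2 → e = e'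

theorem stmt1 {σ τ : Type} (f : σ → τ → Bool)
    (P Q : Finset ((σ → Bool) × (τ → Bool)))
    (hP : IsXYPartition P f) (hPc : IsCompressed P)
    (hQ : IsXYPartition Q f) (hQc : IsCompressed Q) :
    P = Q := by
  -- key: if e ∈ P and e.1 x, then e.2 = f x
  have sub_det : ∀ (R : Finset ((σ → Bool) × (τ → Bool))), IsXYPartition R f →
      ∀ e ∈ R, ∀ x, e.1 x = true → ∀ y, e.2 y = f x y := by
    intro R hR e he x hx y
    obtain ⟨-, hexc, -, hf⟩ := hR
    by_cases hy : e.2 y = true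
    · rw [hy]
      exact ((hf x y).mpr ⟨e, he, hx, hy⟩).symm
    · simp only [Bool.not_eq_true] at hy
      rw [hy]
      by_contra h
      have hfxy : f x y = true := by
        cases hfx : f x y
        · exact absurd hfx.symm h
        · rfl
      obtain ⟨e', he', hx', hy'⟩ := (hf x y).mp hfxy
      rcases eq_or_ne e e' with rfl | hne
      · rw [hy] at hy'; exact Bool.false_ne_true hy'
      · exact hexc e he e' he' hne x ⟨hx, hx'⟩
  have subset : ∀ (R S : Finset ((σ → Bool) × (τ → Bool))),
      IsXYPartition R f → IsCompressed R → IsXYPartition S f → IsCompressed S →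
      R ⊆ S := by
    intro R S hR hRc hS hSc e he
    obtain ⟨x0, hx0⟩ := hR.1 e he
    obtain ⟨e', he', hx0'⟩ := hS.2.2.1 x0
    have hsub : e.2 = e'.2 := by
      funext y
      rw [sub_det R hR e he x0 hx0 y, sub_det S hS e' he' x0 hx0' y]
    have hprime : e.1 = e'.1 := by
      funext x
      cases hx : e.1 x
      · cases hx' : e'.1 x
        · rfl
        · -- e'.1 x true ⇒ x has some e₂ ∈ R with e₂.2 = f x = e'.2 = e.2, so e₂ = e
          obtain ⟨e₂, he₂, hx₂⟩ := hR.2.2.1 x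
          have : e₂.2 = e.2 := by
            funext y
            rw [sub_det R hR e₂ he₂ x hx₂ y, hsub,
              sub_det S hS e' he' x hx' y]
          have : e₂ = e := hRc e₂ he₂ e he this
          rw [this] at hx₂
          rw [hx] at hx₂
          exact absurd hx₂ Bool.false_ne_true
      · obtain ⟨e₂, he₂, hx₂⟩ := hS.2.2.1 x
        have : e₂.2 = e'.2 := by
          funext y
          rw [sub_det S hS e₂ he₂ x hx₂ y, ← hsub,
            sub_det R hR e he x hx y]
        have : e₂ = e' := hSc e₂ he₂ e' he' this
        rw [this] at hx₂
        rw [hx₂]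
    have : e = e' := Prod.ext hprime hsub
    rw [this]; exact he'
  exact le_antisymm (subset P Q hP hPc hQ hQc) (subset Q P hQ hQc hP hPc)
end

section
/- Let f^b_n(X,Y) = ⋁_{i=1}^n (⋀_{j=1}^{i-1} ¬Y_j) ∧ Y_i ∧ X_i. Then the number of distinct Y-subfunctions f^b_n(x,·), as x ranges over all 2^n assignments to X, is exactly 2^n; hence the compressed (X,Y)-partition of f^b_n has exactly 2^n elements. -/
/-- `fb n x y = ⋁ i, (⋀ j < i, ¬ y j) ∧ y i ∧ x i`. -/
def fb (n : ℕ) (x y : Fin n → Bool) : Bool :=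
  decide (∃ i : Fin n, (∀ j, j < i → y j = false) ∧ y i = true ∧ x i = true)

lemma fb_indicator (n : ℕ) (x : Fin n → Bool) (i : Fin n) :
    fb n x (fun j => decide (j = i)) = x i := by
  unfold fb
  cases h : x i with
  | false =>
    simp only [decide_eq_false_iff_not]
    intro ⟨k, hk1, hk2, hk3⟩
    simp only [decide_eq_true_eq] at hk2
    subst hk2
    rw [h] at hk3; exact Bool.false_ne_true hk3
  | true =>
    simp only [decide_eq_true_eq]
    exact ⟨i, fun j hj => by simp [Fin.ne_of_lt hj], by simp, h⟩

theorem stmt5 (n : ℕ) :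
    ((Finset.univ : Finset (Fin n → Bool)).image (fun x => fb n x)).card = 2 ^ n := by
  rw [Finset.card_image_of_injective _ (fun x x' h => ?_)]
  · simp
  · funext i
    have := congrFun h (fun j => decide (j = i))
    rwa [fb_indicator, fb_indicator] at this
end

section
/- Let f^a_n(X,Y,Z) = ⋁_{i=1}^n (⋀_{j=1}^{i-1} ¬Y_j) ∧ Y_i ∧ X_i (a function over 2n+1 variables in which Z does not occur). Then the set of 2n+1 elements consisting of, for each i, the pairs ((⋀_{j<i} ¬Y_j) ∧ Y_i ∧ X_i, ⊤) and ((⋀_{j<i} ¬Y_j) ∧ Y_i ∧ ¬X_i, ⊥), together with (⋀_{j=1}^{n} ¬Y_j, ⊥), forms an (XY,Z)-partition of f^a_n: the 2n+1 primes are consistent, pairwise mutually exclusive, and exhaustive, and the disjunction of prime-sub conjunctions equals f^a_n. -/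
/-- `fa n` over XY-assignments and the single variable Z (which does not occur). -/
def fa (n : ℕ) (xy : (Fin n → Bool) × (Fin n → Bool)) (_z : Bool) : Bool :=
  fb n xy.1 xy.2

/-!
Read `Y` as selecting its first true position `i`; `f^a_n` then outputs `X_i`, and `false` when `Y`
is all false. The first true position is unique and, over a finite linear order, exists unless `Y`
is all false. Hence at every assignment exactly one prime holds: the one recording the first true
position of `Y` and the value of `X` there, or the one saying that `Y` is all false; and its sub
is the constant value of `f^a_n` at that assignment.
-/

variable {ι : Type}

section FirstTrue

variable [LinearOrder ι]

def IsFirstTrue (y : ι → Bool) (i : ι) : Prop :=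
  (∀ j < i, y j = false) ∧ y i = true

theorem IsFirstTrue.unique {y : ι → Bool} {i i' : ι} (h : IsFirstTrue y i)
    (h' : IsFirstTrue y i') : i = i' := by
  rcases lt_trichotomy i i' with hlt | heq | hlt
  · exact absurd h.2 (by simp [h'.1 i hlt])
  · exact heq
  · exact absurd h'.2 (by simp [h.1 i' hlt])

theorem isFirstTrue_indicator (i : ι) : IsFirstTrue (fun j => decide (j = i)) i :=
  ⟨fun _ hj => decide_eq_false hj.ne, decide_eq_true rfl⟩

theorem exists_isFirstTrue_or_forall_eq_false [WellFoundedLT ι] (y : ι → Bool) :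
    (∃ i, IsFirstTrue y i) ∨ ∀ j, y j = false := by
  by_cases h : ∃ j, y j = true
  · obtain ⟨i, hi, hmin⟩ := wellFounded_lt.has_min {j | y j = true} h
    exact .inl ⟨i, fun j hj => by simpa using fun hyj => hmin j hyj hj, hi⟩
  · exact .inr (by simpa using h)

end FirstTrue

abbrev PrimeSubPair (ι : Type) := (((ι → Bool) × (ι → Bool)) → Bool) × (Bool → Bool)

def allFalsePair [Fintype ι] : PrimeSubPair ι :=
  (fun xy => decide (∀ j, xy.2 j = false), fun _ => false)

theorem allFalsePair_fst_eq_true [Fintype ι] {xy : (ι → Bool) × (ι → Bool)} :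
    (allFalsePair : PrimeSubPair ι).1 xy = true ↔ ∀ j, xy.2 j = false := by
  simp [allFalsePair]

section Partition

variable [LinearOrder ι] [Fintype ι]

def firstTruePair (i : ι) (b : Bool) : PrimeSubPair ι :=
  (fun xy => decide ((∀ j, j < i → xy.2 j = false) ∧ xy.2 i = true ∧ xy.1 i = b), fun _ => b)

def firstTruePartition : Finset (PrimeSubPair ι) :=
  (Finset.univ.image (firstTruePair · true)) ∪ (Finset.univ.image (firstTruePair · false)) ∪
    {allFalsePair}

theorem firstTruePair_fst_eq_true {i : ι} {b : Bool} {xy : (ι → Bool) × (ι → Bool)} :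
    (firstTruePair i b).1 xy = true ↔ IsFirstTrue xy.2 i ∧ xy.1 i = b := by
  simp [firstTruePair, IsFirstTrue, and_assoc]

theorem mem_firstTruePartition {e : PrimeSubPair ι} :
    e ∈ firstTruePartition ↔ (∃ i b, firstTruePair i b = e) ∨ e = allFalsePair := by
  simp only [firstTruePartition, Finset.mem_union, Finset.mem_image, Finset.mem_univ, true_and,
    Finset.mem_singleton, Bool.exists_bool]
  grind

theorem firstTruePair_fst_indicator (i : ι) (b : Bool) :
    (firstTruePair i b).1 (fun _ => b, fun j => decide (j = i)) = true :=
  firstTruePair_fst_eq_true.2 ⟨isFirstTrue_indicator i, rfl⟩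

theorem firstTruePair_injective :
    Function.Injective (Function.uncurry (firstTruePair (ι := ι))) := by
  rintro ⟨i, b⟩ ⟨i', b'⟩ h
  obtain rfl : b = b' := congrFun (congrArg Prod.snd h) true
  have hfst := firstTruePair_fst_indicator i b
  rw [show firstTruePair i b = firstTruePair i' b from h] at hfst
  rw [(firstTruePair_fst_eq_true.1 hfst).1.unique (isFirstTrue_indicator i)]

theorem firstTruePair_ne_allFalsePair (i : ι) (b : Bool) :
    firstTruePair i b ≠ allFalsePair := by
  intro h
  have hfst := firstTruePair_fst_indicator i b
  rw [h, allFalsePair_fst_eq_true] at hfst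
  simpa using hfst i

theorem card_firstTruePartition :
    (firstTruePartition (ι := ι)).card = 2 * Fintype.card ι + 1 := by
  have hinj (b : Bool) : Function.Injective (firstTruePair (ι := ι) · b) :=
    fun i i' h => congrArg Prod.fst (firstTruePair_injective (a₁ := (i, b)) (a₂ := (i', b)) h)
  have hdisj : Disjoint (Finset.univ.image (firstTruePair (ι := ι) · true))
      (Finset.univ.image (firstTruePair · false)) := by
    simp only [Finset.disjoint_left, Finset.mem_image, Finset.mem_univ, true_and]
    rintro _ ⟨i, rfl⟩ ⟨i', h⟩
    simpa [firstTruePair] using congrFun (congrArg Prod.snd h) true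
  have hdisj' : Disjoint (Finset.univ.image (firstTruePair (ι := ι) · true) ∪
      Finset.univ.image (firstTruePair · false)) {allFalsePair} := by
    simp only [Finset.disjoint_singleton_right, Finset.mem_union, Finset.mem_image,
      Finset.mem_univ, true_and, not_or, not_exists]
    exact ⟨fun i => firstTruePair_ne_allFalsePair i true,
      fun i => firstTruePair_ne_allFalsePair i false⟩
  rw [firstTruePartition, Finset.card_union_of_disjoint hdisj', Finset.card_union_of_disjoint hdisj,
    Finset.card_image_of_injective _ (hinj true), Finset.card_image_of_injective _ (hinj false),
    Finset.card_univ, Finset.card_singleton, two_mul]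

theorem exists_fst_eq_true_of_mem_firstTruePartition {e : PrimeSubPair ι}
    (he : e ∈ firstTruePartition) : ∃ xy, e.1 xy = true := by
  rcases mem_firstTruePartition.1 he with ⟨i, b, rfl⟩ | rfl
  · exact ⟨_, firstTruePair_fst_indicator i b⟩
  · exact ⟨(fun _ => false, fun _ => false), allFalsePair_fst_eq_true.2 fun _ => rfl⟩

theorem eq_of_mem_firstTruePartition_of_fst_eq_true {e e' : PrimeSubPair ι}
    (he : e ∈ firstTruePartition) (he' : e' ∈ firstTruePartition)
    {xy : (ι → Bool) × (ι → Bool)} (h : e.1 xy = true) (h' : e'.1 xy = true) : e = e' := by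
  rcases mem_firstTruePartition.1 he with ⟨i, b, rfl⟩ | rfl <;>
    rcases mem_firstTruePartition.1 he' with ⟨i', b', rfl⟩ | rfl <;>
    simp only [firstTruePair_fst_eq_true, allFalsePair_fst_eq_true] at h h'
  · obtain rfl := h.1.unique h'.1
    rw [← h.2, ← h'.2]
  · exact absurd h.1.2 (by simp [h' i])
  · exact absurd h'.1.2 (by simp [h i'])
  · rfl

theorem exists_mem_firstTruePartition_fst_eq_true (xy : (ι → Bool) × (ι → Bool)) :
    ∃ e ∈ firstTruePartition, e.1 xy = true := by
  rcases exists_isFirstTrue_or_forall_eq_false xy.2 with ⟨i, hi⟩ | hall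
  · exact ⟨firstTruePair i (xy.1 i), mem_firstTruePartition.2 (.inl ⟨_, _, rfl⟩),
      firstTruePair_fst_eq_true.2 ⟨hi, rfl⟩⟩
  · exact ⟨allFalsePair, mem_firstTruePartition.2 (.inr rfl), allFalsePair_fst_eq_true.2 hall⟩

theorem exists_mem_firstTruePartition_fst_snd_eq_true_iff {xy : (ι → Bool) × (ι → Bool)}
    {z : Bool} : (∃ e ∈ firstTruePartition, e.1 xy = true ∧ e.2 z = true) ↔
      ∃ i, IsFirstTrue xy.2 i ∧ xy.1 i = true := by
  constructor
  · rintro ⟨e, he, hfst, hsnd⟩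
    rcases mem_firstTruePartition.1 he with ⟨i, b, rfl⟩ | rfl
    · obtain rfl : b = true := hsnd
      exact ⟨i, firstTruePair_fst_eq_true.1 hfst⟩
    · exact absurd hsnd Bool.false_ne_true
  · rintro ⟨i, hi⟩
    exact ⟨firstTruePair i true, mem_firstTruePartition.2 (.inl ⟨_, _, rfl⟩),
      firstTruePair_fst_eq_true.2 hi, rfl⟩

theorem isXYPartition_firstTruePartition {f : (ι → Bool) × (ι → Bool) → Bool → Bool}
    (hf : ∀ xy z, f xy z = true ↔ ∃ i, IsFirstTrue xy.2 i ∧ xy.1 i = true) :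
    IsXYPartition firstTruePartition f :=
  ⟨fun _ he => exists_fst_eq_true_of_mem_firstTruePartition he,
    fun _ he _ he' hne _ h => hne (eq_of_mem_firstTruePartition_of_fst_eq_true he he' h.1 h.2),
    exists_mem_firstTruePartition_fst_eq_true,
    fun xy z => (hf xy z).trans exists_mem_firstTruePartition_fst_snd_eq_true_iff.symm⟩

end Partition

theorem stmt6 (n : ℕ) :
    IsXYPartition
      (((Finset.univ : Finset (Fin n)).image (fun i =>
          ((fun xy : (Fin n → Bool) × (Fin n → Bool) =>
              decide ((∀ j, j < i → xy.2 j = false) ∧ xy.2 i = true ∧ xy.1 i = true)),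
            (fun _ : Bool => true)))) ∪
        ((Finset.univ : Finset (Fin n)).image (fun i =>
          ((fun xy : (Fin n → Bool) × (Fin n → Bool) =>
              decide ((∀ j, j < i → xy.2 j = false) ∧ xy.2 i = true ∧ xy.1 i = false)),
            (fun _ : Bool => false)))) ∪
        {((fun xy : (Fin n → Bool) × (Fin n → Bool) => decide (∀ j, xy.2 j = false)),
          (fun _ : Bool => false))})
      (fa n) ∧
    (((Finset.univ : Finset (Fin n)).image (fun i =>
          ((fun xy : (Fin n → Bool) × (Fin n → Bool) =>
              decide ((∀ j, j < i → xy.2 j = false) ∧ xy.2 i = true ∧ xy.1 i = true)),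
            (fun _ : Bool => true)))) ∪
        ((Finset.univ : Finset (Fin n)).image (fun i =>
          ((fun xy : (Fin n → Bool) × (Fin n → Bool) =>
              decide ((∀ j, j < i → xy.2 j = false) ∧ xy.2 i = true ∧ xy.1 i = false)),
            (fun _ : Bool => false)))) ∪
        {((fun xy : (Fin n → Bool) × (Fin n → Bool) => decide (∀ j, xy.2 j = false)),
          (fun _ : Bool => false))}).card = 2 * n + 1 := by
  have hfa (xy : (Fin n → Bool) × (Fin n → Bool)) (z : Bool) :
      fa n xy z = true ↔ ∃ i, IsFirstTrue xy.2 i ∧ xy.1 i = true := by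
    simp [fa, fb, IsFirstTrue, and_assoc]
  have hcard : (firstTruePartition (ι := Fin n)).card = 2 * n + 1 := by
    rw [card_firstTruePartition, Fintype.card_fin]
  -- The `decide`s above elaborate with `Fin`-specific instances such as `Nat.decidableForallFin`,
  -- so the set is `firstTruePartition` only up to (subsingleton) decidability instances.
  convert And.intro (isXYPartition_firstTruePartition hfa) hcard using 2 <;>
    · unfold firstTruePartition firstTruePair allFalsePair
      congr!
end

section
/- (Correctness of Apply on partitions) Let {(p_i, s_i)}_{i∈I} and {(q_j, r_j)}_{j∈J} be (X,Y)-partitions of f and g respectively, and let ∘ be any binary Boolean operator. Then the set {(p_i ∧ q_j, s_i ∘ r_j) : i∈I, j∈J, p_i ∧ q_j satisfiable} is an (X,Y)-partition of f ∘ g: its primes are consistent, pairwise mutually exclusive, and exhaustive, and the disjunction of its prime-sub conjunctions equals f ∘ g, where (f ∘ g)(z) = f(z) ∘ g(z). -/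
lemma val_eq {σ τ : Type} {P : Finset ((σ → Bool) × (τ → Bool))} {f : σ → τ → Bool}
    (hP : IsXYPartition P f) {e} (he : e ∈ P) {x} (hx : e.1 x = true) (y) :
    f x y = e.2 y := by
  obtain ⟨-, hex, -, hiff⟩ := hP
  cases hsy : e.2 y with
  | true => exact (hiff x y).mpr ⟨e, he, hx, hsy⟩
  | false =>
    by_contra h
    have hf : f x y = true := by revert h; cases f x y <;> simp
    obtain ⟨e', he', hx', hy'⟩ := (hiff x y).mp hf
    rcases eq_or_ne e e' with rfl | hne
    · simp [hsy] at hy'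
    · exact hex e he e' he' hne x ⟨hx, hx'⟩

theorem stmt12 {σ τ : Type} [Fintype σ] [DecidableEq σ] [Fintype τ] [DecidableEq τ]
    (f g : σ → τ → Bool) (P Q : Finset ((σ → Bool) × (τ → Bool)))
    (op : Bool → Bool → Bool)
    (hP : IsXYPartition P f) (hQ : IsXYPartition Q g) :
    IsXYPartition
      (((P ×ˢ Q).filter (fun e => ∃ x, e.1.1 x = true ∧ e.2.1 x = true)).image
        (fun e => ((fun x => e.1.1 x && e.2.1 x), (fun y => op (e.1.2 y) (e.2.2 y)))))
      (fun x y => op (f x y) (g x y)) := by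
  refine ⟨?_, ?_, ?_, ?_⟩
  · rintro e he
    simp only [Finset.mem_image, Finset.mem_filter, Finset.mem_product] at he
    obtain ⟨⟨a, b⟩, ⟨⟨ha, hb⟩, x, h1, h2⟩, rfl⟩ := he
    exact ⟨x, by simp only [Bool.and_eq_true]; exact ⟨h1, h2⟩⟩
  · rintro e he e' he' hne x ⟨h1, h2⟩
    simp only [Finset.mem_image, Finset.mem_filter, Finset.mem_product] at he he'
    obtain ⟨⟨a, b⟩, ⟨⟨ha, hb⟩, -⟩, rfl⟩ := he
    obtain ⟨⟨a', b'⟩, ⟨⟨ha', hb'⟩, -⟩, rfl⟩ := he'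
    simp only [Bool.and_eq_true] at h1 h2
    have haa : a = a' := by
      by_contra hne2
      exact hP.2.1 a ha a' ha' hne2 x ⟨h1.1, h2.1⟩
    have hbb : b = b' := by
      by_contra hne2
      exact hQ.2.1 b hb b' hb' hne2 x ⟨h1.2, h2.2⟩
    exact hne (by rw [haa, hbb])
  · intro x
    obtain ⟨a, ha, hax⟩ := hP.2.2.1 x
    obtain ⟨b, hb, hbx⟩ := hQ.2.2.1 x
    have hmem : (a, b) ∈ (P ×ˢ Q).filter
        (fun e => ∃ x, e.1.1 x = true ∧ e.2.1 x = true) :=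
      Finset.mem_filter.mpr ⟨Finset.mem_product.mpr ⟨ha, hb⟩, x, hax, hbx⟩
    exact ⟨_, Finset.mem_image_of_mem _ hmem, by simp [hax, hbx]⟩
  · intro x y
    obtain ⟨a, ha, hax⟩ := hP.2.2.1 x
    obtain ⟨b, hb, hbx⟩ := hQ.2.2.1 x
    have hf := val_eq hP ha hax y
    have hg := val_eq hQ hb hbx y
    constructor
    · intro hop
      have hmem : (a, b) ∈ (P ×ˢ Q).filter
          (fun e => ∃ x, e.1.1 x = true ∧ e.2.1 x = true) :=
        Finset.mem_filter.mpr ⟨Finset.mem_product.mpr ⟨ha, hb⟩, x, hax, hbx⟩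
      refine ⟨_, Finset.mem_image_of_mem _ hmem, by simp [hax, hbx], ?_⟩
      simpa [hf, hg] using hop
    · rintro ⟨e, he, hex, hey⟩
      simp only [Finset.mem_image, Finset.mem_filter, Finset.mem_product] at he
      obtain ⟨⟨a', b'⟩, ⟨⟨ha', hb'⟩, -⟩, rfl⟩ := he
      simp only [Bool.and_eq_true] at hex
      have := val_eq hP ha' hex.1 y
      have := val_eq hQ hb' hex.2 y
      simp_all
end

section
/- Let f^c_n(X,Y,Z,W) = ⋁_{i=1}^n (⋀_{j<i} ¬Y_j) ∧ Y_i ∧ [ (X_i ∧ (W ∨ Z_i)) ∨ (¬X_i ∧ Z_i) ]. Then conditioning on W = true gives f^c_n|W = ⋁_{i=1}^n (⋀_{j<i} ¬Y_j) ∧ Y_i ∧ (X_i ∨ Z_i), and in the compressed (XY, ZW)-partition of f^c_n|W, the prime associated with the sub ⊤ is exactly f^b_n(X,Y) = ⋁_{i=1}^n (⋀_{j<i} ¬Y_j) ∧ Y_i ∧ X_i. -/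
/-- `fc n (x,y) (z,w) = ⋁ i, (⋀ j<i, ¬y j) ∧ y i ∧ ((x i ∧ (w ∨ z i)) ∨ (¬x i ∧ z i))`. -/
def fc (n : ℕ) (xy : (Fin n → Bool) × (Fin n → Bool))
    (zw : (Fin n → Bool) × Bool) : Bool :=
  decide (∃ i : Fin n, (∀ j, j < i → xy.2 j = false) ∧ xy.2 i = true ∧
    ((xy.1 i = true ∧ (zw.2 = true ∨ zw.1 i = true)) ∨
      (xy.1 i = false ∧ zw.1 i = true)))

theorem stmt15 (n : ℕ) :
    (∀ (xy : (Fin n → Bool) × (Fin n → Bool)) (zw : (Fin n → Bool) × Bool),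
      fc n xy (zw.1, true) =
        decide (∃ i : Fin n, (∀ j, j < i → xy.2 j = false) ∧ xy.2 i = true ∧
          (xy.1 i = true ∨ zw.1 i = true))) ∧
    ((fun xy : (Fin n → Bool) × (Fin n → Bool) =>
        decide ((fun zw : (Fin n → Bool) × Bool => fc n xy (zw.1, true)) =
          (fun _ => true))) =
      (fun xy => fb n xy.1 xy.2)) := by
  constructor
  · intro xy zw
    simp only [fc, decide_eq_decide]
    constructor
    · rintro ⟨i, h1, h2, h3⟩
      refine ⟨i, h1, h2, ?_⟩
      rcases h3 with ⟨hx, _⟩ | ⟨_, hz⟩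
      · exact Or.inl hx
      · exact Or.inr hz
    · rintro ⟨i, h1, h2, h3⟩
      refine ⟨i, h1, h2, ?_⟩
      cases hx : xy.1 i with
      | true => exact Or.inl ⟨rfl, Or.inl trivial⟩
      | false =>
        rcases h3 with hx' | hz
        · rw [hx] at hx'; exact absurd hx' (by simp)
        · exact Or.inr ⟨rfl, hz⟩
  · funext xy
    rw [fb, decide_eq_decide]
    constructor
    · intro h
      have h0 := congrFun h (fun _ => false, true)
      simp only [fc, decide_eq_true_eq] at h0
      obtain ⟨i, h1, h2, h3⟩ := h0
      refine ⟨i, h1, h2, ?_⟩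
      rcases h3 with ⟨hx, _⟩ | ⟨_, hz⟩
      · exact hx
      · exact absurd hz (by simp)
    · rintro ⟨i, h1, h2, h3⟩
      funext zw
      simp only [fc, decide_eq_true_eq]
      exact ⟨i, h1, h2, Or.inl ⟨h3, Or.inl trivial⟩⟩
end

section
/- Let f^c_n be as above. Then the compressed (XY, ZW)-partition of f^c_n has exactly 2n+1 elements, namely, for each i ∈ {1,…,n}: ((⋀_{j<i} ¬Y_j) ∧ Y_i ∧ X_i, W ∨ Z_i) and ((⋀_{j<i} ¬Y_j) ∧ Y_i ∧ ¬X_i, Z_i), together with (⋀_{j=1}^n ¬Y_j, ⊥); in particular all 2n+1 subs are pairwise inequivalent Boolean functions. -/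
/-!
The primes of the partition are the fibres of the labelling `xy ↦ (i, X_i)`, where `i` is the
first index with `Y_i` true (and the label is `none` when there is none). This labelling is
surjective onto `Option (Fin n × Bool)`, and on the fibre of `(i, b)` the function `f^c_n`
restricts to `(b ∧ W) ∨ Z_i`, on the fibre of `none` to `⊥`. The fibres of a surjective labelling
always form an (X,Y)-partition of a function that factors through it, compressed as soon as the
subs depend injectively on the label; here they do, because `W` and each `Z_i` can be set
independently. Hence the partition has `|Option (Fin n × Bool)| = 2n + 1` elements.
-/

section Fibers

variable {σ τ κ : Type} [DecidableEq (σ → Bool)] [DecidableEq (τ → Bool)] [Fintype κ]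
  [DecidableEq κ]

def fiberPartition (g : σ → κ) (s : κ → τ → Bool) : Finset ((σ → Bool) × (τ → Bool)) :=
  Finset.univ.image fun k => (fun x => decide (g x = k), s k)

theorem isXYPartition_fiberPartition {g : σ → κ} (hg : Function.Surjective g)
    (s : κ → τ → Bool) : IsXYPartition (fiberPartition g s) (s ∘ g) := by
  simp only [IsXYPartition, fiberPartition, Function.comp_apply, Finset.mem_image,
    Finset.mem_univ, true_and, forall_exists_index, forall_apply_eq_imp_iff,
    exists_exists_eq_and, decide_eq_true_eq]
  refine ⟨hg, ?_, fun x => ⟨g x, rfl⟩, fun x y => ⟨fun h => ⟨g x, rfl, h⟩, ?_⟩⟩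
  · rintro k k' hne x ⟨rfl, rfl⟩
    exact hne rfl
  · rintro ⟨k, rfl, h⟩
    exact h

theorem isCompressed_fiberPartition (g : σ → κ) {s : κ → τ → Bool} (hs : Function.Injective s) :
    IsCompressed (fiberPartition g s) := by
  simp only [IsCompressed, fiberPartition, Finset.mem_image, Finset.mem_univ, true_and,
    forall_exists_index, forall_apply_eq_imp_iff]
  intro k k' h
  rw [hs h]

theorem card_fiberPartition (g : σ → κ) {s : κ → τ → Bool} (hs : Function.Injective s) :
    (fiberPartition g s).card = Fintype.card κ :=
  Finset.card_image_of_injective _ fun _ _ h => hs (congrArg Prod.snd h)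

end Fibers

section Fc

variable {n : ℕ}

def fcLabel (xy : (Fin n → Bool) × (Fin n → Bool)) : Option (Fin n × Bool) :=
  (Fin.find? xy.2).map fun i => (i, xy.1 i)

def fcSub : Option (Fin n × Bool) → (Fin n → Bool) × Bool → Bool
  | none => fun _ => false
  | some (i, b) => fun zw => (b && zw.2) || zw.1 i

theorem fcLabel_eq_some_iff {xy : (Fin n → Bool) × (Fin n → Bool)} {i : Fin n} {b : Bool} :
    fcLabel xy = some (i, b) ↔ (∀ j, j < i → xy.2 j = false) ∧ xy.2 i = true ∧ xy.1 i = b := by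
  simp only [fcLabel, Option.map_eq_some_iff, Prod.mk.injEq, Fin.find?_eq_some_iff]
  constructor
  · rintro ⟨i, ⟨hi, hlt⟩, rfl, rfl⟩
    exact ⟨hlt, hi, rfl⟩
  · rintro ⟨hlt, hi, rfl⟩
    exact ⟨i, ⟨hi, hlt⟩, rfl, rfl⟩

theorem fcLabel_eq_none_iff {xy : (Fin n → Bool) × (Fin n → Bool)} :
    fcLabel xy = none ↔ ∀ j, xy.2 j = false := by
  simp [fcLabel]

theorem fcLabel_surjective : Function.Surjective (fcLabel (n := n)) := by
  rintro (_ | ⟨i, b⟩)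
  · exact ⟨(fun _ => false, fun _ => false), fcLabel_eq_none_iff.2 fun _ => rfl⟩
  · refine ⟨(fun _ => b, fun j => decide (j = i)), fcLabel_eq_some_iff.2 ⟨?_, by simp, rfl⟩⟩
    intro j hj
    simp [hj.ne]

theorem fcSub_injective : Function.Injective (fcSub (n := n)) := by
  rintro (_ | ⟨i, b⟩) (_ | ⟨i', b'⟩) h
  · rfl
  · simpa [fcSub] using congrFun h (fun j => decide (j = i'), false)
  · simpa [fcSub] using congrFun h (fun j => decide (j = i), false)
  · obtain rfl : i' = i := by simpa [fcSub] using congrFun h (fun j => decide (j = i), false)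
    obtain rfl : b = b' := by simpa [fcSub] using congrFun h (fun _ => false, true)
    rfl

theorem fc_eq_fcSub_comp_fcLabel : fc n = fcSub ∘ fcLabel := by
  ext xy zw
  have first_iff (i : Fin n) :
      ((∀ j, j < i → xy.2 j = false) ∧ xy.2 i = true) ↔ Fin.find? xy.2 = some i := by
    rw [Fin.find?_eq_some_iff, and_comm]
  simp only [fc, Function.comp_apply, ← and_assoc, first_iff]
  rcases hfind : Fin.find? xy.2 with _ | i
  · simp [fcLabel, hfind, fcSub]
  · cases hx : xy.1 i <;> simp [fcLabel, hfind, fcSub, hx]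

def fcPartition (n : ℕ) :
    Finset (((Fin n → Bool) × (Fin n → Bool) → Bool) × ((Fin n → Bool) × Bool → Bool)) :=
  ((Finset.univ : Finset (Fin n)).image (fun i =>
      ((fun xy : (Fin n → Bool) × (Fin n → Bool) =>
          decide ((∀ j, j < i → xy.2 j = false) ∧ xy.2 i = true ∧ xy.1 i = true)),
        (fun zw : (Fin n → Bool) × Bool => zw.2 || zw.1 i)))) ∪
    ((Finset.univ : Finset (Fin n)).image (fun i =>
      ((fun xy : (Fin n → Bool) × (Fin n → Bool) =>
          decide ((∀ j, j < i → xy.2 j = false) ∧ xy.2 i = true ∧ xy.1 i = false)),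
        (fun zw : (Fin n → Bool) × Bool => zw.1 i)))) ∪
    {((fun xy : (Fin n → Bool) × (Fin n → Bool) => decide (∀ j, xy.2 j = false)),
      (fun _ : (Fin n → Bool) × Bool => false))}

theorem fcPartition_eq_fiberPartition : fcPartition n = fiberPartition fcLabel fcSub := by
  ext e
  simp only [fcPartition, fiberPartition, Finset.mem_union, Finset.mem_image, Finset.mem_univ,
    true_and, Finset.mem_singleton, Option.exists, Prod.exists, Bool.exists_bool, exists_or,
    fcLabel_eq_some_iff, fcLabel_eq_none_iff, fcSub, Bool.true_and, Bool.false_and,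
    Bool.false_or, eq_comm (a := e)]
  tauto

end Fc

theorem stmt16 (n : ℕ) :
    IsXYPartition
      (((Finset.univ : Finset (Fin n)).image (fun i =>
          ((fun xy : (Fin n → Bool) × (Fin n → Bool) =>
              decide ((∀ j, j < i → xy.2 j = false) ∧ xy.2 i = true ∧ xy.1 i = true)),
            (fun zw : (Fin n → Bool) × Bool => zw.2 || zw.1 i)))) ∪
        ((Finset.univ : Finset (Fin n)).image (fun i =>
          ((fun xy : (Fin n → Bool) × (Fin n → Bool) =>
              decide ((∀ j, j < i → xy.2 j = false) ∧ xy.2 i = true ∧ xy.1 i = false)),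
            (fun zw : (Fin n → Bool) × Bool => zw.1 i)))) ∪
        {((fun xy : (Fin n → Bool) × (Fin n → Bool) => decide (∀ j, xy.2 j = false)),
          (fun _ : (Fin n → Bool) × Bool => false))})
      (fc n) ∧
    IsCompressed
      (((Finset.univ : Finset (Fin n)).image (fun i =>
          ((fun xy : (Fin n → Bool) × (Fin n → Bool) =>
              decide ((∀ j, j < i → xy.2 j = false) ∧ xy.2 i = true ∧ xy.1 i = true)),
            (fun zw : (Fin n → Bool) × Bool => zw.2 || zw.1 i)))) ∪
        ((Finset.univ : Finset (Fin n)).image (fun i =>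
          ((fun xy : (Fin n → Bool) × (Fin n → Bool) =>
              decide ((∀ j, j < i → xy.2 j = false) ∧ xy.2 i = true ∧ xy.1 i = false)),
            (fun zw : (Fin n → Bool) × Bool => zw.1 i)))) ∪
        {((fun xy : (Fin n → Bool) × (Fin n → Bool) => decide (∀ j, xy.2 j = false)),
          (fun _ : (Fin n → Bool) × Bool => false))}) ∧
    (((Finset.univ : Finset (Fin n)).image (fun i =>
          ((fun xy : (Fin n → Bool) × (Fin n → Bool) =>
              decide ((∀ j, j < i → xy.2 j = false) ∧ xy.2 i = true ∧ xy.1 i = true)),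
            (fun zw : (Fin n → Bool) × Bool => zw.2 || zw.1 i)))) ∪
        ((Finset.univ : Finset (Fin n)).image (fun i =>
          ((fun xy : (Fin n → Bool) × (Fin n → Bool) =>
              decide ((∀ j, j < i → xy.2 j = false) ∧ xy.2 i = true ∧ xy.1 i = false)),
            (fun zw : (Fin n → Bool) × Bool => zw.1 i)))) ∪
        {((fun xy : (Fin n → Bool) × (Fin n → Bool) => decide (∀ j, xy.2 j = false)),
          (fun _ : (Fin n → Bool) × Bool => false))}).card = 2 * n + 1 := by
  have hP := fcPartition_eq_fiberPartition (n := n)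
  unfold fcPartition at hP
  rw [hP, fc_eq_fcSub_comp_fcLabel]
  refine ⟨isXYPartition_fiberPartition fcLabel_surjective fcSub,
    isCompressed_fiberPartition fcLabel fcSub_injective, ?_⟩
  rw [card_fiberPartition fcLabel fcSub_injective]
  simp only [Fintype.card_option, Fintype.card_prod, Fintype.card_fin, Fintype.card_bool]
  ring
end

section
/- Let f^c_n be as above. Then f^c_n ∧ W = (⋁_{i=1}^n (⋀_{j<i} ¬Y_j) ∧ Y_i ∧ (X_i ∨ Z_i)) ∧ W, and in the compressed (XY,ZW)-partition of f^c_n ∧ W, the prime whose sub is the literal W (as a function of the ZW-variables) is exactly f^b_n(X,Y) = ⋁_{i=1}^n (⋀_{j<i} ¬Y_j) ∧ Y_i ∧ X_i. -/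
theorem stmt17 (n : ℕ) :
    (∀ (xy : (Fin n → Bool) × (Fin n → Bool)) (zw : (Fin n → Bool) × Bool),
      (fc n xy zw && zw.2) =
        (decide (∃ i : Fin n, (∀ j, j < i → xy.2 j = false) ∧ xy.2 i = true ∧
          (xy.1 i = true ∨ zw.1 i = true)) && zw.2)) ∧
    ((fun xy : (Fin n → Bool) × (Fin n → Bool) =>
        decide ((fun zw : (Fin n → Bool) × Bool => fc n xy zw && zw.2) =
          (fun zw : (Fin n → Bool) × Bool => zw.2))) =
      (fun xy => fb n xy.1 xy.2)) := by
  constructor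
  · intro xy zw
    cases hw : zw.2
    · simp
    · simp only [Bool.and_true, fc, hw]
      apply decide_eq_decide.mpr
      constructor <;> rintro ⟨i, h1, h2, h3⟩ <;> refine ⟨i, h1, h2, ?_⟩ <;>
        revert h3 <;> cases hx : xy.1 i <;> cases hz : zw.1 i <;> simp
  · funext xy
    rw [fb]
    apply decide_eq_decide.mpr
    constructor
    · intro h
      have h' := congrFun h (fun _ => false, true)
      simp only [fc, Bool.and_true, decide_eq_true_eq] at h'
      obtain ⟨i, h1, h2, h3⟩ := h'
      refine ⟨i, h1, h2, ?_⟩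
      rcases h3 with ⟨hx, _⟩ | ⟨_, hz⟩
      · exact hx
      · exact absurd hz (by simp)
    · rintro ⟨i, h1, h2, h3⟩
      funext zw
      cases hw : zw.2
      · simp [hw]
      · simp only [hw, Bool.and_true, fc]
        exact decide_eq_true ⟨i, h1, h2, Or.inl ⟨h3, Or.inl trivial⟩⟩
end
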